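/- (Critical points of the expected update for a laterally connected network of BCM neurons.) Let K = N, let d_1, …, d_K ∈ ℝ^N be linearly independent with matrix D (rows d_kᵀ) and α_1, …, α_K > 0, Σα_k = 1, P = diag(α). Consider n neurons with weight multivector m ∈ ℝ^{nN}, lateral connection matrix L (n×n, symmetric, ‖L‖ < 1), per-class response multivector c = ((I − L)^{-1} ⊗ D) m ∈ ℝ^{nK}, and expected update h(m) = (I_n ⊗ Dᵀ P) Φ(c), where Φ applies Φ_i(c_i)_k = c_{ik}(c_{ik} − Σ_j α_j c_{ij}²) to each neuron's response block c_i ∈ ℝ^K separately. Then h(m) = 0 if and only if for every neuron i there exists a subset S_i ⊆ {1, …, K} with c_{ik} = (Σ_{j∈S_i} α_j)^{-1} for k ∈ S_i and c_{ik} = 0 for k ∉ S_i. -/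

import Mathlib

open Matrix Kronecker

/-! Since the `d k` are independent and every `α k ≠ 0`, `Dᵀ P` and hence `I ⊗ Dᵀ P` are
invertible, so `h(m) = 0` means `Φ_i(c_i) = 0` for every neuron separately. For a single
response vector `v`, `Φ(v) = 0` forces each `v k` to be `0` or the threshold
`θ = ∑ α_j v_j²`; on the support `S` this gives `θ = (∑_{j ∈ S} α_j) θ²`, so
`θ = (∑_{j ∈ S} α_j)⁻¹`. -/

section BCM

variable {ι F : Type*} [Fintype ι] [Field F]

/-- The BCM sliding threshold. -/
def bcmThreshold (α v : ι → F) : F := ∑ j, α j * v j ^ 2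

def bcmPhi (α v : ι → F) (k : ι) : F := v k * (v k - bcmThreshold α v)

theorem bcmThreshold_eq_of_eqOn_of_eq_zero {α v : ι → F} {S : Finset ι} {t : F}
    (hS : ∀ k ∈ S, v k = t) (hSc : ∀ k ∉ S, v k = 0) :
    bcmThreshold α v = (∑ j ∈ S, α j) * t ^ 2 := by
  rw [bcmThreshold, Finset.sum_mul,
    ← Finset.sum_subset (Finset.subset_univ S) fun k _ hk => by simp [hSc k hk]]
  exact Finset.sum_congr rfl fun k hk => by rw [hS k hk]

theorem bcmPhi_eq_zero_iff {α v : ι → F} :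
    bcmPhi α v = 0 ↔
      ∃ S : Finset ι, (∀ k ∈ S, v k = (∑ j ∈ S, α j)⁻¹) ∧ ∀ k ∉ S, v k = 0 := by
  classical
  set θ := bcmThreshold α v with hθ
  constructor
  · intro h
    have hv : ∀ k, v k = 0 ∨ v k = θ := fun k =>
      (mul_eq_zero.mp (congrFun h k)).imp id sub_eq_zero.mp
    set S := Finset.univ.filter fun k => v k ≠ 0
    have hS : ∀ k ∈ S, v k = θ := fun k hk =>
      (hv k).resolve_left (Finset.mem_filter.mp hk).2
    have hSc : ∀ k ∉ S, v k = 0 := fun k hk => by simpa [S] using hk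
    refine ⟨S, fun k hk => ?_, hSc⟩
    have hθ0 : θ ≠ 0 := hS k hk ▸ (Finset.mem_filter.mp hk).2
    have hθS : θ = (∑ j ∈ S, α j) * θ ^ 2 := bcmThreshold_eq_of_eqOn_of_eq_zero hS hSc
    rw [hS k hk]
    exact eq_inv_of_mul_eq_one_right (mul_left_cancel₀ hθ0 (by linear_combination -hθS))
  · rintro ⟨S, hS, hSc⟩
    -- `s * (s⁻¹)² = s⁻¹` holds also for `s = 0`, i.e. for `S = ∅`.
    have hθS : θ = (∑ j ∈ S, α j)⁻¹ := by
      rw [hθ, bcmThreshold_eq_of_eqOn_of_eq_zero hS hSc, sq, ← mul_assoc]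
      simpa using inv_mul_mul_self (∑ j ∈ S, α j)⁻¹
    funext k
    by_cases hk : k ∈ S
    · simp [bcmPhi, ← hθ, hθS, hS k hk]
    · simp [bcmPhi, hSc k hk]

end BCM

theorem Matrix.one_kronecker_mulVec_eq_zero_iff {m n R : Type*} [Fintype m] [Fintype n]
    [DecidableEq m] [DecidableEq n] [CommRing R] {A : Matrix n n R} (hA : IsUnit A)
    {x : m × n → R} : ((1 : Matrix m m R) ⊗ₖ A) *ᵥ x = 0 ↔ x = 0 :=
  (mulVec_injective_of_isUnit (isUnit_one.kronecker hA)).eq_iff' (mulVec_zero _)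

theorem network_bcm_critical_points_general
    (nn K : ℕ) (d : Fin K → Fin K → ℝ) (hd : LinearIndependent ℝ d)
    (α : Fin K → ℝ) (hα : ∀ k, 0 < α k)
    (D : Matrix (Fin K) (Fin K) ℝ) (hD : D = Matrix.of d)
    (P : Matrix (Fin K) (Fin K) ℝ) (hP : P = Matrix.diagonal α)
    (c : Fin nn × Fin K → ℝ)
    (Φc : Fin nn × Fin K → ℝ)
    (hΦc : ∀ i k, Φc (i, k) =
      c (i, k) * (c (i, k) - ∑ j, α j * c (i, j) ^ 2)) :
    ((1 : Matrix (Fin nn) (Fin nn) ℝ) ⊗ₖ (Dᵀ * P)).mulVec Φc = 0 ↔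
      ∀ i : Fin nn, ∃ S : Finset (Fin K),
        (∀ k ∈ S, c (i, k) = (∑ j ∈ S, α j)⁻¹) ∧
        (∀ k ∉ S, c (i, k) = 0) := by
  have hDunit : IsUnit Dᵀ :=
    (isUnit_transpose _).mpr (linearIndependent_rows_iff_isUnit.mp (hD ▸ hd))
  have hPunit : IsUnit P :=
    hP ▸ isUnit_diagonal.mpr (Pi.isUnit_iff.mpr fun k => (hα k).ne'.isUnit)
  have hΦ : ∀ i, (fun k => Φc (i, k)) = bcmPhi α fun k => c (i, k) := fun i =>
    funext (hΦc i)
  rw [one_kronecker_mulVec_eq_zero_iff (hDunit.mul hPunit)]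
  simp only [← bcmPhi_eq_zero_iff, ← hΦ, funext_iff, Prod.forall, Pi.zero_apply]

/-- **Critical points of the expected update for a laterally connected
network of BCM neurons.**  With `K = N`, linearly independent mean vectors
`d k` (rows of `D`), `P = diag α`, a symmetric lateral matrix `L` of operator
norm `< 1`, responses `c = ((I − L)⁻¹ ⊗ D) m`, and blockwise BCM
nonlinearity `Φ`, the expected network update `h(m) = (I ⊗ Dᵀ P) Φ(c)`
vanishes iff every neuron `i` admits a subset `S i` of classes with
`c i k = (∑_{j ∈ S i} α j)⁻¹` on `S i` and `c i k = 0` off `S i`. -/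
theorem network_bcm_critical_points
    (nn K : ℕ) (d : Fin K → Fin K → ℝ) (hd : LinearIndependent ℝ d)
    (α : Fin K → ℝ) (hα : ∀ k, 0 < α k) (hαsum : ∑ k, α k = 1)
    (D : Matrix (Fin K) (Fin K) ℝ) (hD : D = Matrix.of d)
    (P : Matrix (Fin K) (Fin K) ℝ) (hP : P = Matrix.diagonal α)
    (L : Matrix (Fin nn) (Fin nn) ℝ) (hLsym : L.IsSymm)
    (hL : ‖Matrix.toEuclideanCLM (𝕜 := ℝ) L‖ < 1)
    (m : Fin nn × Fin K → ℝ)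
    (c : Fin nn × Fin K → ℝ)
    (hc : c = ((1 - L)⁻¹ ⊗ₖ D).mulVec m)
    (Φc : Fin nn × Fin K → ℝ)
    (hΦc : ∀ i k, Φc (i, k) =
      c (i, k) * (c (i, k) - ∑ j, α j * c (i, j) ^ 2)) :
    ((1 : Matrix (Fin nn) (Fin nn) ℝ) ⊗ₖ (Dᵀ * P)).mulVec Φc = 0 ↔
      ∀ i : Fin nn, ∃ S : Finset (Fin K),
        (∀ k ∈ S, c (i, k) = (∑ j ∈ S, α j)⁻¹) ∧
        (∀ k ∉ S, c (i, k) = 0) :=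
  network_bcm_critical_points_general nn K d hd α hα D hD P hP c Φc hΦc
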